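/- There exist M > 0, the open interval Ω := (0,M) ⊂ ℝ, and a measurable set E ⊆ Ω such that P^γ_s(E;Ω) = +∞ for every s ∈ (0,1). Explicitly, one may take a decreasing sequence β_k > 0 with M := Σ_{k≥1} β_k < ∞ and Σ_{k≥1} β_k^{1-s} = +∞ for all s ∈ (0,1), set σ_m := Σ_{k=1}^m β_k, I_m := (σ_m, σ_{m+1}), and E := ∪_{j≥1} I_{2j}. -/

import Mathlib

/-!
Take lengths `β k ≈ 1 / (k log² k)`: they are summable, yet `∑ β k ^ (1 - s)` diverges for every
`s < 1`. On `[0, M]` the Gaussian density is bounded below, and for `0 ≤ x, y` with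
`|x - y| ≤ ρ ≤ 1/2` the Mehler kernel is at least of order `1 / ρ` for `t ∈ (ρ², 2ρ²)`, so
`K_s(x, y) ≳ ρ^(-1-s)`. The even interval `I (2j+2) ⊆ E` ends with a piece of length `β (2j+3)`
that touches the odd interval `I (2j+3) ⊆ Eᶜ` of the same length, so this pair contributes
`≳ β^(-1-s) · β · β = β (2j+3) ^ (1 - s)` to `L_s(E ∩ Ω, Eᶜ ∩ Ω)`. The pairs are disjoint, and by
monotonicity the odd-indexed subseries of `∑ β k ^ (1 - s)` still diverges.
-/

open MeasureTheory Real Set Filter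

/-- The standard Gaussian measure on ℝ. -/
noncomputable def gauss1 : Measure ℝ :=
  volume.withDensity fun x => ENNReal.ofReal ((2 * π) ^ (-(1 : ℝ) / 2) * Real.exp (-x ^ 2 / 2))

/-- The one-dimensional Mehler kernel. -/
noncomputable def mehler1 (t x y : ℝ) : ℝ :=
  (1 - Real.exp (-2 * t)) ^ (-(1 : ℝ) / 2) *
    Real.exp (-(Real.exp (-2 * t) * x ^ 2 - 2 * Real.exp (-t) * x * y +
      Real.exp (-2 * t) * y ^ 2) / (2 * (1 - Real.exp (-2 * t))))

/-- The kernel $K_σ(x,y) = ∫_0^∞ M_t(x,y) t^{-σ/2-1} dt$. -/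
noncomputable def Kker1 (σ : ℝ) (x y : ℝ) : ENNReal :=
  ∫⁻ t in Ioi (0 : ℝ), ENNReal.ofReal (mehler1 t x y * t ^ (-σ / 2 - 1))

/-- The interaction $L^γ_s(A,B)$. -/
noncomputable def Lgamma1 (s : ℝ) (A B : Set ℝ) : ENNReal :=
  ∫⁻ x in A, ∫⁻ y in B, Kker1 s x y ∂gauss1 ∂gauss1

/-- The fractional Gaussian $s$-perimeter in dimension one. -/
noncomputable def Pgamma1 (s : ℝ) (E Ω : Set ℝ) : ENNReal :=
  Lgamma1 s (E ∩ Ω) (Eᶜ ∩ Ω) + Lgamma1 s (E ∩ Ω) (Eᶜ ∩ Ωᶜ) + Lgamma1 s (E ∩ Ωᶜ) (Eᶜ ∩ Ω)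

open Function

lemma Antitone.not_summable_comp_two_mul_add {f : ℕ → ℝ} (hf : Antitone f) (h0 : ∀ k, 0 ≤ f k)
    (hns : ¬ Summable f) (m : ℕ) : ¬ Summable fun j => f (2 * j + m) := by
  intro h
  refine hns ((summable_nat_add_iff m).1 (h.even_add_odd ?_))
  exact h.of_nonneg_of_le (fun j => h0 _) fun j => hf (by omega)

lemma ENNReal.tsum_ofReal_eq_top {ι : Type*} {f : ι → ℝ} (h0 : ∀ k, 0 ≤ f k) (hf : ¬ Summable f) :
    ∑' k, ENNReal.ofReal (f k) = ⊤ := by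
  by_contra hne
  exact hf <| (ENNReal.summable_toReal hne).congr fun k => ENNReal.toReal_ofReal (h0 k)

lemma eventually_rpow_mul_log_sq_le {C p : ℝ} (hC : 0 < C) (hp : p < 1) :
    ∀ᶠ x : ℝ in atTop, (C * x * log x ^ 2) ^ p ≤ x := by
  have hCp : 0 < C ^ p := rpow_pos_of_pos hC p
  have hlog := (isLittleO_log_rpow_rpow_atTop (2 * p) (sub_pos.2 hp)).def (inv_pos.2 hCp)
  filter_upwards [hlog, eventually_ge_atTop 1] with x hx hx1
  have hx0 : 0 < x := by linarith
  have hL : 0 ≤ log x := log_nonneg hx1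
  rw [norm_of_nonneg (rpow_nonneg hL _), norm_of_nonneg (rpow_nonneg hx0.le _)] at hx
  calc (C * x * log x ^ 2) ^ p = C ^ p * x ^ p * log x ^ (2 * p) := by
        rw [mul_rpow (by positivity) (by positivity), mul_rpow hC.le hx0.le, rpow_mul hL]
        norm_cast
    _ ≤ C ^ p * x ^ p * ((C ^ p)⁻¹ * x ^ (1 - p)) := by gcongr
    _ = x := by
        rw [mul_mul_mul_comm, mul_inv_cancel₀ hCp.ne', one_mul, ← rpow_add hx0]
        norm_num

noncomputable def intervalLength (k : ℕ) : ℝ :=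
  (8 * ((k : ℝ) + 2) * log ((k : ℝ) + 2) ^ 2)⁻¹

lemma log_natCast_add_two_pos (k : ℕ) : 0 < log ((k : ℝ) + 2) :=
  log_pos (by linarith [k.cast_nonneg (α := ℝ)])

lemma intervalLength_pos (k : ℕ) : 0 < intervalLength k := by
  have := log_natCast_add_two_pos k
  unfold intervalLength
  positivity

lemma intervalLength_antitone : Antitone intervalLength := by
  intro j k hjk
  have hjk' : (j : ℝ) + 2 ≤ (k : ℝ) + 2 := by gcongr
  have := log_natCast_add_two_pos j
  unfold intervalLength
  gcongr

lemma intervalLength_le_quarter (k : ℕ) : intervalLength k ≤ 1 / 4 := by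
  refine (intervalLength_antitone k.zero_le).trans ?_
  have h : (0.69 : ℝ) ≤ log 2 := by linarith [log_two_gt_d9]
  simp only [intervalLength, Nat.cast_zero, zero_add]
  rw [inv_le_comm₀ (by positivity) (by norm_num)]
  nlinarith

lemma summable_intervalLength : Summable intervalLength := by
  refine (summable_condensed_iff_of_nonneg (fun k => (intervalLength_pos k).le)
    fun m n _ h => intervalLength_antitone h).1 ?_
  have hdom : Summable fun n : ℕ => (2 * log 2 ^ 2)⁻¹ * (((n + 1 : ℕ) : ℝ) ^ 2)⁻¹ :=
    ((summable_nat_add_iff 1).2 (Real.summable_nat_pow_inv.2 one_lt_two)).mul_left _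
  refine hdom.of_nonneg_of_le (fun n => by have := intervalLength_pos (2 ^ n); positivity)
    fun n => ?_
  have hL : ((n : ℝ) + 1) * log 2 / 2 ≤ log ((2 : ℝ) ^ n + 2) := by
    have h1 : (n : ℝ) * log 2 ≤ log ((2 : ℝ) ^ n + 2) := by
      rw [← log_pow]; exact log_le_log (by positivity) (by linarith)
    have h2 : log 2 ≤ log ((2 : ℝ) ^ n + 2) :=
      log_le_log two_pos (by linarith [pow_pos (two_pos (α := ℝ)) n])
    linarith
  have hLpos : 0 < log ((2 : ℝ) ^ n + 2) := lt_of_lt_of_le (by positivity) hL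
  simp only [intervalLength, Nat.cast_pow, Nat.cast_ofNat, Nat.cast_add, Nat.cast_one]
  calc (2 : ℝ) ^ n * (8 * (2 ^ n + 2) * log (2 ^ n + 2) ^ 2)⁻¹
      ≤ (8 * log (2 ^ n + 2) ^ 2)⁻¹ := by
        rw [← div_eq_mul_inv, div_le_iff₀ (by positivity), inv_mul_eq_div,
          le_div_iff₀ (by positivity)]
        nlinarith [pow_pos (two_pos (α := ℝ)) n, pow_pos hLpos 2]
    _ ≤ (2 * log 2 ^ 2 * ((n : ℝ) + 1) ^ 2)⁻¹ := by
        refine inv_anti₀ (by positivity) ?_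
        nlinarith [pow_le_pow_left₀ (by positivity) hL 2]
    _ = (2 * log 2 ^ 2)⁻¹ * (((n : ℝ) + 1) ^ 2)⁻¹ := mul_inv _ _

lemma not_summable_intervalLength_rpow {p : ℝ} (hp1 : p < 1) :
    ¬ Summable fun k => intervalLength k ^ p := by
  have hharm : ¬ Summable fun k : ℕ => ((k : ℝ) + 2)⁻¹ := by
    simpa using mt (summable_nat_add_iff 2).1 Real.not_summable_natCast_inv
  intro h
  refine hharm (h.of_norm_bounded_eventually ?_)
  have hx : Tendsto (fun k : ℕ => (k : ℝ) + 2) atTop atTop :=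
    tendsto_atTop_add_const_right _ 2 tendsto_natCast_atTop_atTop
  rw [Nat.cofinite_eq_atTop]
  filter_upwards [hx.eventually (eventually_rpow_mul_log_sq_le (C := 8) (by norm_num) hp1)]
    with k hk
  have := log_natCast_add_two_pos k
  rw [norm_of_nonneg (by positivity), intervalLength, inv_rpow (by positivity)]
  exact inv_anti₀ (by positivity) hk

lemma inv_two_mul_sqrt_le_mehler1 {t x y : ℝ} (ht0 : 0 < t) (ht : t ≤ 1 / 2) (hxy : 0 ≤ x * y)
    (hdist : (x - y) ^ 2 ≤ t) : (2 * √(2 * t))⁻¹ ≤ mehler1 t x y := by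
  set q := 1 - exp (-2 * t) with hq
  have hq_le : q ≤ 2 * t := by linarith [add_one_le_exp (-2 * t)]
  -- `exp (-2t) ≤ 1 / (1 + 2t) ≤ 1 - t` for `t ≤ 1 / 2`
  have hq_ge : t ≤ q := by
    have h1 : exp (-2 * t) * (1 + 2 * t) ≤ 1 := by
      calc exp (-2 * t) * (1 + 2 * t) ≤ exp (-2 * t) * exp (2 * t) := by
            gcongr; linarith [add_one_le_exp (2 * t)]
        _ = 1 := by rw [← exp_add]; simp
    nlinarith [exp_pos (-2 * t)]
  have hq0 : 0 < q := ht0.trans_le hq_ge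
  -- the numerator is `exp (-2t) (x - y)² - 2 x y (exp (-t) - exp (-2t)) ≤ (x - y)² ≤ t ≤ q`
  have hnum : exp (-2 * t) * x ^ 2 - 2 * exp (-t) * x * y + exp (-2 * t) * y ^ 2 ≤ q := by
    have h1 : exp (-2 * t) ≤ exp (-t) := exp_le_exp.2 (by linarith)
    have h2 : exp (-2 * t) ≤ 1 := exp_le_one_iff.2 (by linarith)
    nlinarith [mul_le_mul_of_nonneg_right h1 hxy, mul_le_mul_of_nonneg_right h2 (sq_nonneg (x - y))]
  have hexp : 1 / 2 ≤ exp (-(exp (-2 * t) * x ^ 2 - 2 * exp (-t) * x * y +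
      exp (-2 * t) * y ^ 2) / (2 * q)) := by
    calc (1 : ℝ) / 2 ≤ exp (-1 / 2) := by linarith [add_one_le_exp (-1 / 2)]
      _ ≤ _ := by
        refine exp_le_exp.2 ?_
        rw [neg_div, neg_div, neg_le_neg_iff, div_le_div_iff₀ (by positivity) two_pos]
        linarith
  have hsqrt : (√(2 * t))⁻¹ ≤ q ^ (-(1 : ℝ) / 2) := by
    rw [neg_div, rpow_neg hq0.le, ← sqrt_eq_rpow]
    exact inv_anti₀ (sqrt_pos.2 hq0) (sqrt_le_sqrt hq_le)
  rw [mehler1, ← hq, mul_inv, mul_comm, inv_eq_one_div 2]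
  exact mul_le_mul hsqrt hexp (by norm_num) (rpow_nonneg hq0.le _)

lemma div_le_mehler1_mul_rpow {s ρ x y t : ℝ} (hs₁ : -2 ≤ s) (hs₂ : s ≤ 2) (hρ0 : 0 < ρ)
    (hρ : ρ ≤ 1 / 2) (hxy : 0 ≤ x * y) (hdist : (x - y) ^ 2 ≤ ρ ^ 2)
    (ht : t ∈ Ioo (ρ ^ 2) (2 * ρ ^ 2)) :
    ρ ^ (-1 - s) / (16 * ρ ^ 2) ≤ mehler1 t x y * t ^ (-s / 2 - 1) := by
  obtain ⟨ht1, ht2⟩ := ht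
  have ht0 : 0 < t := lt_trans (by positivity) ht1
  have hM : (4 * ρ)⁻¹ ≤ mehler1 t x y := by
    refine le_trans ?_ (inv_two_mul_sqrt_le_mehler1 ht0 (by nlinarith) hxy (by linarith))
    refine inv_anti₀ (by positivity) ?_
    have : √(2 * t) ≤ 2 * ρ := (sqrt_le_left (by positivity)).2 (by nlinarith)
    linarith
  have hpow : (2 * ρ ^ 2) ^ (-s / 2 - 1) = 2 ^ (-s / 2 - 1) * (ρ ^ (-1 - s) / ρ) := by
    rw [mul_rpow two_pos.le (by positivity), ← rpow_natCast, ← rpow_mul hρ0.le,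
      ← rpow_sub_one hρ0.ne']
    congr 2
    push_cast
    ring
  have hT : ρ ^ (-1 - s) / ρ / 4 ≤ t ^ (-s / 2 - 1) := by
    have h2 : (1 : ℝ) / 4 ≤ 2 ^ (-s / 2 - 1) := by
      calc (1 : ℝ) / 4 = 2 ^ (-2 : ℝ) := by norm_num
        _ ≤ 2 ^ (-s / 2 - 1) := rpow_le_rpow_of_exponent_le one_le_two (by linarith)
    calc ρ ^ (-1 - s) / ρ / 4 ≤ 2 ^ (-s / 2 - 1) * (ρ ^ (-1 - s) / ρ) := by
          have : 0 ≤ ρ ^ (-1 - s) / ρ := by positivity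
          nlinarith
      _ = (2 * ρ ^ 2) ^ (-s / 2 - 1) := hpow.symm
      _ ≤ t ^ (-s / 2 - 1) := rpow_le_rpow_of_nonpos ht0 ht2.le (by linarith)
  calc ρ ^ (-1 - s) / (16 * ρ ^ 2) = (4 * ρ)⁻¹ * (ρ ^ (-1 - s) / ρ / 4) := by field_simp; ring
    _ ≤ mehler1 t x y * t ^ (-s / 2 - 1) :=
      mul_le_mul hM hT (by positivity) ((inv_pos.2 (by positivity)).le.trans hM)

lemma ofReal_rpow_le_Kker1 {s ρ x y : ℝ} (hs₁ : -2 ≤ s) (hs₂ : s ≤ 2) (hρ0 : 0 < ρ)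
    (hρ : ρ ≤ 1 / 2) (hxy : 0 ≤ x * y) (hdist : |x - y| ≤ ρ) :
    ENNReal.ofReal (ρ ^ (-1 - s) / 16) ≤ Kker1 s x y := by
  have hdist2 : (x - y) ^ 2 ≤ ρ ^ 2 := sq_le_sq' (abs_le.1 hdist).1 (abs_le.1 hdist).2
  set c := ρ ^ (-1 - s) / (16 * ρ ^ 2) with hc
  calc ENNReal.ofReal (ρ ^ (-1 - s) / 16)
        = ENNReal.ofReal c * volume (Ioo (ρ ^ 2) (2 * ρ ^ 2)) := by
        rw [volume_Ioo, ← ENNReal.ofReal_mul (by positivity), hc]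
        congr 1
        field_simp
        ring
    _ = ∫⁻ _ in Ioo (ρ ^ 2) (2 * ρ ^ 2), ENNReal.ofReal c := (setLIntegral_const _ _).symm
    _ ≤ ∫⁻ t in Ioo (ρ ^ 2) (2 * ρ ^ 2), ENNReal.ofReal (mehler1 t x y * t ^ (-s / 2 - 1)) :=
        setLIntegral_mono' measurableSet_Ioo fun t ht =>
          ENNReal.ofReal_le_ofReal (div_le_mehler1_mul_rpow hs₁ hs₂ hρ0 hρ hxy hdist2 ht)
    _ ≤ Kker1 s x y := lintegral_mono_set fun t ht => lt_trans (by positivity) ht.1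

lemma ofReal_mul_le_gauss1_Ioo {a b M : ℝ} (ha : -M ≤ a) (hb : b ≤ M) :
    ENNReal.ofReal ((2 * π) ^ (-(1 : ℝ) / 2) * exp (-M ^ 2 / 2) * (b - a))
      ≤ gauss1 (Ioo a b) := by
  rw [gauss1, withDensity_apply _ measurableSet_Ioo,
    ENNReal.ofReal_mul (by positivity), ← volume_Ioo, ← setLIntegral_const]
  refine setLIntegral_mono' measurableSet_Ioo fun x hx => ENNReal.ofReal_le_ofReal ?_
  have hx2 : x ^ 2 ≤ M ^ 2 := sq_le_sq' (by linarith [hx.1]) (by linarith [hx.2])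
  gcongr

lemma mul_measure_mul_le_Lgamma1 {s : ℝ} {c : ENNReal} {A B : Set ℝ} (hA : MeasurableSet A)
    (hB : MeasurableSet B) (hK : ∀ x ∈ A, ∀ y ∈ B, c ≤ Kker1 s x y) :
    c * gauss1 A * gauss1 B ≤ Lgamma1 s A B := by
  rw [mul_right_comm, ← setLIntegral_const]
  refine setLIntegral_mono' hA fun x hx => ?_
  rw [← setLIntegral_const]
  exact setLIntegral_mono' hB (hK x hx)

lemma Lgamma1_mono {s : ℝ} {A A' B B' : Set ℝ} (hA : A ⊆ A') (hB : B ⊆ B') :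
    Lgamma1 s A B ≤ Lgamma1 s A' B' :=
  (lintegral_mono_set hA).trans (lintegral_mono fun _ => lintegral_mono_set hB)

lemma tsum_Lgamma1_le {s : ℝ} {A B : ℕ → Set ℝ} {A' B' : Set ℝ} (hA : ∀ j, MeasurableSet (A j))
    (hdisj : Pairwise (Disjoint on A)) (hAA' : ∀ j, A j ⊆ A') (hBB' : ∀ j, B j ⊆ B') :
    ∑' j, Lgamma1 s (A j) (B j) ≤ Lgamma1 s A' B' :=
  calc ∑' j, Lgamma1 s (A j) (B j) ≤ ∑' j, Lgamma1 s (A j) B' :=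
        ENNReal.tsum_le_tsum fun j => Lgamma1_mono subset_rfl (hBB' j)
    _ = Lgamma1 s (⋃ j, A j) B' := (lintegral_iUnion hA hdisj _).symm
    _ ≤ Lgamma1 s A' B' := Lgamma1_mono (iUnion_subset hAA') subset_rfl

lemma ofReal_rpow_le_Lgamma1_Ioo {s a h M : ℝ} (hs₁ : -2 ≤ s) (hs₂ : s ≤ 1) (ha : 0 ≤ a)
    (hh0 : 0 < h) (hh : h ≤ 1 / 4) (hM : a + 2 * h ≤ M) :
    ENNReal.ofReal (((2 * π) ^ (-(1 : ℝ) / 2) * exp (-M ^ 2 / 2)) ^ 2 / 64 * h ^ (1 - s))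
      ≤ Lgamma1 s (Ioo a (a + h)) (Ioo (a + h) (a + 2 * h)) := by
  have hK : ∀ x ∈ Ioo a (a + h), ∀ y ∈ Ioo (a + h) (a + 2 * h),
      ENNReal.ofReal ((2 * h) ^ (-1 - s) / 16) ≤ Kker1 s x y := by
    rintro x ⟨hx1, hx2⟩ y ⟨hy1, hy2⟩
    refine ofReal_rpow_le_Kker1 hs₁ (by linarith) (by positivity) (by linarith)
      (mul_nonneg (by linarith) (by linarith)) (abs_le.2 ⟨by linarith, by linarith⟩)
  have hA := ofReal_mul_le_gauss1_Ioo (a := a) (b := a + h) (M := M) (by linarith) (by linarith)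
  have hB := ofReal_mul_le_gauss1_Ioo (a := a + h) (b := a + 2 * h) (M := M) (by linarith) hM
  rw [add_sub_cancel_left] at hA
  rw [show a + 2 * h - (a + h) = h by ring] at hB
  refine le_trans ?_ ((mul_le_mul' (mul_le_mul' le_rfl hA) hB).trans
    (mul_measure_mul_le_Lgamma1 measurableSet_Ioo measurableSet_Ioo hK))
  rw [← ENNReal.ofReal_mul (by positivity), ← ENNReal.ofReal_mul (by positivity)]
  refine ENNReal.ofReal_le_ofReal ?_
  set d := (2 * π) ^ (-(1 : ℝ) / 2) * exp (-M ^ 2 / 2)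
  have h2 : (1 : ℝ) / 4 ≤ 2 ^ (-1 - s) := by
    calc (1 : ℝ) / 4 = 2 ^ (-2 : ℝ) := by norm_num
      _ ≤ 2 ^ (-1 - s) := rpow_le_rpow_of_exponent_le one_le_two (by linarith)
  have hpow : (2 * h) ^ (-1 - s) * (h * h) = 2 ^ (-1 - s) * h ^ (1 - s) := by
    rw [mul_rpow two_pos.le hh0.le, mul_assoc, ← sq, ← rpow_natCast, ← rpow_add hh0]
    congr 2
    push_cast
    ring
  calc d ^ 2 / 64 * h ^ (1 - s) ≤ d ^ 2 / 16 * (2 ^ (-1 - s) * h ^ (1 - s)) := by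
        have : 0 ≤ d ^ 2 / 16 * h ^ (1 - s) := by positivity
        nlinarith
    _ = (2 * h) ^ (-1 - s) / 16 * (d * h) * (d * h) := by
        rw [← hpow]; ring

lemma Ioo_sum_range_subset_Ioo_tsum {β : ℕ → ℝ} (h0 : ∀ k, 0 ≤ β k) (hsum : Summable β)
    (m n : ℕ) : Ioo (∑ k ∈ Finset.range m, β k) (∑ k ∈ Finset.range n, β k) ⊆ Ioo 0 (∑' k, β k) :=
  fun _ hx => ⟨(Finset.sum_nonneg fun k _ => h0 k).trans_lt hx.1,
    hx.2.trans_le (hsum.sum_le_tsum _ fun k _ => h0 k)⟩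

lemma Monotone.pairwise_disjoint_on_Ioo_even {f : ℕ → ℝ} (hf : Monotone f) :
    Pairwise (Disjoint on fun j => Ioo (f (2 * j + 2)) (f (2 * j + 3))) := fun i j hij =>
  hf.pairwise_disjoint_on_Ioo_succ (show 2 * i + 2 ≠ 2 * j + 2 by omega)

lemma Monotone.Ioo_odd_subset_compl_iUnion_Ioo_even {f : ℕ → ℝ} (hf : Monotone f) (j : ℕ) :
    Ioo (f (2 * j + 3)) (f (2 * j + 4)) ⊆ (⋃ i, Ioo (f (2 * i + 2)) (f (2 * i + 3)))ᶜ := by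
  refine fun x hx hxE => ?_
  obtain ⟨i, hi⟩ := mem_iUnion.1 hxE
  exact (hf.pairwise_disjoint_on_Ioo_succ (show 2 * i + 2 ≠ 2 * j + 3 by omega)).le_bot ⟨hi, hx⟩

lemma Pgamma1_iUnion_Ioo_eq_top {β : ℕ → ℝ} (hpos : ∀ k, 0 < β k) (hanti : Antitone β)
    (hsum : Summable β) (hle : ∀ k, β k ≤ 1 / 4) {s : ℝ} (hs₁ : -2 ≤ s) (hs₂ : s ≤ 1)
    (hns : ¬ Summable fun k => β k ^ (1 - s)) :
    Pgamma1 s (⋃ j : ℕ, Ioo (∑ k ∈ Finset.range (2 * j + 2), β k)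
      (∑ k ∈ Finset.range (2 * j + 3), β k)) (Ioo 0 (∑' k, β k)) = ⊤ := by
  set σ : ℕ → ℝ := fun m => ∑ k ∈ Finset.range m, β k
  set E := ⋃ j : ℕ, Ioo (σ (2 * j + 2)) (σ (2 * j + 3))
  set Ω := Ioo 0 (∑' k, β k)
  have hσ_succ (m : ℕ) : σ (m + 1) = σ m + β m := Finset.sum_range_succ _ _
  have hσ0 (m : ℕ) : 0 ≤ σ m := Finset.sum_nonneg fun k _ => (hpos k).le
  have hσM (m : ℕ) : σ m ≤ ∑' k, β k := hsum.sum_le_tsum _ fun k _ => (hpos k).le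
  have hΩ (m n : ℕ) : Ioo (σ m) (σ n) ⊆ Ω :=
    Ioo_sum_range_subset_Ioo_tsum (fun k => (hpos k).le) hsum m n
  have hσ : Monotone σ := monotone_nat_of_le_succ fun m => by linarith [hσ_succ m, hpos m]
  have hgap (j : ℕ) : σ (2 * j + 2) ≤ σ (2 * j + 3) - β (2 * j + 3) := by
    linarith [hσ_succ (2 * j + 2), hanti (show 2 * j + 2 ≤ 2 * j + 3 by omega)]
  -- the right end of length `β (2j+3)` of the even interval `I (2j+2)` faces the odd `I (2j+3)`
  set A : ℕ → Set ℝ := fun j => Ioo (σ (2 * j + 3) - β (2 * j + 3)) (σ (2 * j + 3))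
  have hA (j : ℕ) : A j ⊆ Ioo (σ (2 * j + 2)) (σ (2 * j + 3)) := Ioo_subset_Ioo_left (hgap j)
  have hAE (j : ℕ) : A j ⊆ E ∩ Ω := fun x hx =>
    ⟨mem_iUnion_of_mem j (hA j hx), hΩ _ _ (hA j hx)⟩
  have hAdisj : Pairwise (Disjoint on A) := fun i j hij =>
    (hσ.pairwise_disjoint_on_Ioo_even hij).mono (hA i) (hA j)
  have hBE (j : ℕ) : Ioo (σ (2 * j + 3)) (σ (2 * j + 4)) ⊆ Eᶜ ∩ Ω := fun x hx =>
    ⟨hσ.Ioo_odd_subset_compl_iUnion_Ioo_even j hx, hΩ _ _ hx⟩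
  set c := ((2 * π) ^ (-(1 : ℝ) / 2) * exp (-(∑' k, β k) ^ 2 / 2)) ^ 2 / 64
  have hL (j : ℕ) : ENNReal.ofReal (c * β (2 * j + 3) ^ (1 - s))
      ≤ Lgamma1 s (A j) (Ioo (σ (2 * j + 3)) (σ (2 * j + 4))) := by
    have := ofReal_rpow_le_Lgamma1_Ioo hs₁ hs₂ ((hσ0 _).trans (hgap j)) (hpos (2 * j + 3))
      (hle _) (M := ∑' k, β k) (by linarith [hσ_succ (2 * j + 3), hσM (2 * j + 4)])
    rwa [sub_add_cancel, show σ (2 * j + 3) - β (2 * j + 3) + 2 * β (2 * j + 3)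
      = σ (2 * j + 4) by linarith [hσ_succ (2 * j + 3)]] at this
  have hc : 0 < c := by positivity
  have hns' : ¬ Summable fun j => c * β (2 * j + 3) ^ (1 - s) := by
    rw [summable_mul_left_iff hc.ne']
    exact Antitone.not_summable_comp_two_mul_add
      (fun i j h => rpow_le_rpow (hpos _).le (hanti h) (by linarith))
      (fun k => (rpow_pos_of_pos (hpos k) _).le) hns 3
  have hterm (j : ℕ) : 0 ≤ c * β (2 * j + 3) ^ (1 - s) := by
    have := hpos (2 * j + 3)
    positivity
  refine eq_top_iff.2 ?_
  calc ⊤ = ∑' j, ENNReal.ofReal (c * β (2 * j + 3) ^ (1 - s)) :=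
        (ENNReal.tsum_ofReal_eq_top hterm hns').symm
    _ ≤ ∑' j, Lgamma1 s (A j) (Ioo (σ (2 * j + 3)) (σ (2 * j + 4))) := ENNReal.tsum_le_tsum hL
    _ ≤ Lgamma1 s (E ∩ Ω) (Eᶜ ∩ Ω) := tsum_Lgamma1_le (fun _ => measurableSet_Ioo) hAdisj hAE hBE
    _ ≤ Pgamma1 s E Ω := le_add_right (le_add_right le_rfl)

/-- there are $M>0$, $Ω = (0,M)$ and a measurable $E ⊆ Ω$ with
$P^γ_s(E;Ω)=+∞$ for every $s∈(0,1)$; explicitly, $E$ may be taken as the union of the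
even-indexed intervals determined by a positive decreasing summable sequence $(β_k)$
with $Σ_k β_k^{1-s}=+∞$ for all $s∈(0,1)$. -/
theorem stmt_15 :
    ∃ (M : ℝ) (E : Set ℝ), 0 < M ∧ E ⊆ Set.Ioo 0 M ∧ MeasurableSet E ∧
      (∃ β : ℕ → ℝ, (∀ k, 0 < β k) ∧ (∀ j k, j ≤ k → β k ≤ β j) ∧ Summable β ∧
        M = ∑' k, β k ∧
        (∀ s ∈ Set.Ioo (0 : ℝ) 1, ¬ Summable fun k => β k ^ (1 - s)) ∧
        E = ⋃ j : ℕ, Set.Ioo (∑ k ∈ Finset.range (2 * j + 2), β k)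
          (∑ k ∈ Finset.range (2 * j + 3), β k)) ∧
      ∀ s ∈ Set.Ioo (0 : ℝ) 1, Pgamma1 s E (Set.Ioo 0 M) = ⊤ := by
  have hpos := intervalLength_pos
  have hsum := summable_intervalLength
  have hns (s : ℝ) (hs : s ∈ Ioo (0 : ℝ) 1) : ¬ Summable fun k => intervalLength k ^ (1 - s) :=
    not_summable_intervalLength_rpow (by linarith [hs.1])
  refine ⟨_, _, hsum.tsum_pos (fun k => (hpos k).le) 0 (hpos 0),
    iUnion_subset fun j => Ioo_sum_range_subset_Ioo_tsum (fun k => (hpos k).le) hsum _ _,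
    MeasurableSet.iUnion fun _ => measurableSet_Ioo,
    ⟨intervalLength, hpos, fun _ _ h => intervalLength_antitone h, hsum, rfl, hns, rfl⟩,
    fun s hs => ?_⟩
  exact Pgamma1_iUnion_Ioo_eq_top hpos intervalLength_antitone hsum intervalLength_le_quarter
    (by linarith [hs.1]) hs.2.le (hns s hs)
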